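/- Let f_1, ..., f_n ∈ ℚ[t]^m have degrees d_1 ≤ ... ≤ d_n and linearly independent pilot vectors f̃_1, ..., f̃_n ∈ ℚ^m. Let ρ_{i,j} ∈ ℚ(t) be the Gram–Schmidt coefficients of f_1,...,f_n over ℚ(t) and μ_{i,j} the Gram–Schmidt coefficients of f̃_1,...,f̃_n over ℚ. Then for all 1 ≤ j < i ≤ n, lim_{t→∞} ρ_{i,j}(t) / t^{d_i - d_j} = μ_{i,j}. -/

import Mathlib

open Polynomial Filter

noncomputable def dotF {F : Type*} [CommRing F] {m : ℕ} (u v : Fin m → F) : F :=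
  ∑ k, u k * v k

noncomputable def gs {F : Type*} [Field F] {m : ℕ} (f : ℕ → (Fin m → F)) : ℕ → (Fin m → F)
  | i => f i - ∑ j : Fin i,
      (dotF (f i) (gs f j) / dotF (gs f j) (gs f j)) • gs f j
  termination_by i => i
  decreasing_by exact j.2

noncomputable def gsCoeff {F : Type*} [Field F] {m : ℕ} (f : ℕ → (Fin m → F)) (i j : ℕ) : F :=
  dotF (f i) (gs f j) / dotF (gs f j) (gs f j)

/-- The degree of a vector of polynomials: max of the coordinate degrees (`natDegree`). -/
noncomputable def degVec {m : ℕ} {R : Type*} [Semiring R] (f : Fin m → Polynomial R) : ℕ :=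
  Finset.univ.sup fun k => (f k).natDegree

/-- The pilot vector: the vector of coefficients in degree `degVec f`. -/
noncomputable def pilot {m : ℕ} {R : Type*} [Semiring R] (f : Fin m → Polynomial R) : Fin m → R :=
  fun k => (f k).coeff (degVec f)

/-- View a vector of rational polynomials inside ℚ(t)^m. -/
noncomputable def toRF {m : ℕ} (f : Fin m → Polynomial ℚ) : Fin m → RatFunc ℚ :=
  fun k => algebraMap (Polynomial ℚ) (RatFunc ℚ) (f k)

/-- Evaluation of a rational function at a real number (junk at poles). -/
noncomputable def evalR (r : RatFunc ℚ) (t : ℝ) : ℝ :=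
  RatFunc.eval (algebraMap ℚ ℝ) t r

/-! ### Auxiliary lemmas -/

lemma gs_eq {F : Type*} [Field F] {m : ℕ} (f : ℕ → (Fin m → F)) (i : ℕ) :
    gs f i = f i - ∑ j : Fin i, gsCoeff f i j • gs f j := by
  rw [gs]; rfl

/-- Eventual nonvanishing of the denominator. -/
lemma denom_ev (r : RatFunc ℚ) :
    ∀ᶠ t : ℝ in atTop, Polynomial.eval₂ (algebraMap ℚ ℝ) t r.denom ≠ 0 := by
  have h0 : r.denom.map (algebraMap ℚ ℝ) ≠ 0 := by
    simpa [Polynomial.map_eq_zero] using r.denom_ne_zero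
  filter_upwards [Polynomial.eventually_no_roots _ h0] with t ht
  rw [Polynomial.eval₂_eq_eval_map]
  exact ht

lemma evalR_add_ev (a b : RatFunc ℚ) :
    ∀ᶠ t : ℝ in atTop, evalR (a + b) t = evalR a t + evalR b t := by
  unfold evalR
  filter_upwards [denom_ev a, denom_ev b] with t ha hb
  exact RatFunc.eval_add (algebraMap ℚ ℝ) t ha hb

lemma evalR_mul_ev (a b : RatFunc ℚ) :
    ∀ᶠ t : ℝ in atTop, evalR (a * b) t = evalR a t * evalR b t := by
  unfold evalR
  filter_upwards [denom_ev a, denom_ev b] with t ha hb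
  exact RatFunc.eval_mul (algebraMap ℚ ℝ) t ha hb

/-- limit of `r(t)/t^k` at infinity. -/
def Lim (r : RatFunc ℚ) (k : ℤ) (c : ℚ) : Prop :=
  Tendsto (fun t : ℝ => evalR r t / t ^ k) atTop (nhds (c : ℝ))

lemma lim_zero (k : ℤ) : Lim 0 k 0 := by
  have : (fun t : ℝ => evalR 0 t / t ^ k) = fun _ => (0 : ℝ) := by
    funext t; simp [evalR]
  rw [Lim, this]; simpa using tendsto_const_nhds

lemma lim_add {a b : RatFunc ℚ} {k : ℤ} {ca cb : ℚ} (ha : Lim a k ca) (hb : Lim b k cb) :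
    Lim (a + b) k (ca + cb) := by
  have h := (ha.add hb)
  rw [Lim]
  push_cast
  refine Tendsto.congr' ?_ h
  filter_upwards [evalR_add_ev a b] with t ht
  rw [ht, add_div]

lemma lim_mul {a b : RatFunc ℚ} {k l : ℤ} {ca cb : ℚ} (ha : Lim a k ca) (hb : Lim b l cb) :
    Lim (a * b) (k + l) (ca * cb) := by
  have h := (ha.mul hb)
  rw [Lim]
  push_cast
  refine Tendsto.congr' ?_ h
  filter_upwards [evalR_mul_ev a b, eventually_gt_atTop (0 : ℝ)] with t ht htpos
  rw [ht, zpow_add₀ (ne_of_gt htpos), div_mul_div_comm]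

lemma lim_neg_one : Lim (-1) 0 (-1) := by
  have : (fun t : ℝ => evalR (-1) t / t ^ (0:ℤ)) = fun _ => (-1 : ℝ) := by
    funext t
    have h1 : (-1 : RatFunc ℚ) = RatFunc.C (-1) := by simp
    rw [evalR, h1, RatFunc.eval_C]
    simp
  rw [Lim, this]; simpa using tendsto_const_nhds

lemma lim_sub {a b : RatFunc ℚ} {k : ℤ} {ca cb : ℚ} (ha : Lim a k ca) (hb : Lim b k cb) :
    Lim (a - b) k (ca - cb) := by
  have h1 : Lim ((-1) * b) (0 + k) ((-1) * cb) := lim_mul lim_neg_one hb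
  rw [zero_add] at h1
  have := lim_add ha h1
  simpa [sub_eq_add_neg] using this

lemma lim_sum {ι : Type*} (s : Finset ι) (g : ι → RatFunc ℚ) (c : ι → ℚ) (k : ℤ)
    (h : ∀ i ∈ s, Lim (g i) k (c i)) :
    Lim (∑ i ∈ s, g i) k (∑ i ∈ s, c i) := by
  classical
  induction s using Finset.induction_on with
  | empty => simpa using lim_zero k
  | insert _ _ hx ih =>
    rename_i a s
    rw [Finset.sum_insert hx, Finset.sum_insert hx]
    exact lim_add (h a (Finset.mem_insert_self a s))
      (ih fun i hi => h i (Finset.mem_insert_of_mem hi))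

lemma lim_div {a b : RatFunc ℚ} {k l : ℤ} {ca cb : ℚ} (ha : Lim a k ca) (hb : Lim b l cb)
    (hcb : cb ≠ 0) : Lim (a / b) (k - l) (ca / cb) := by
  have hb0 : b ≠ 0 := by
    rintro rfl
    have h0 := lim_zero l
    have : ((cb : ℝ)) = ((0 : ℚ) : ℝ) := tendsto_nhds_unique hb h0
    exact hcb (by exact_mod_cast this)
  have hcbR : ((cb : ℝ)) ≠ 0 := by exact_mod_cast hcb
  have hbne : ∀ᶠ t : ℝ in atTop, evalR b t ≠ 0 := by
    filter_upwards [hb.eventually_ne hcbR] with t ht h0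
    exact ht (by simp [h0])
  have key : ∀ᶠ t : ℝ in atTop, evalR (a / b) t = evalR a t / evalR b t := by
    filter_upwards [evalR_mul_ev (a / b) b, hbne] with t hm hbt
    have h1 : evalR (a / b * b) t = evalR a t := by
      rw [div_mul_cancel₀ _ hb0]
    rw [h1] at hm
    field_simp [hm]
    exact hm.symm
  rw [Lim]
  push_cast
  refine Tendsto.congr' ?_ (ha.div hb hcbR)
  filter_upwards [key, eventually_gt_atTop (0 : ℝ), hbne] with t ht htpos hbt
  rw [Pi.div_apply, ht, zpow_sub₀ (ne_of_gt htpos), div_div_div_comm]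

/-- Base case: a polynomial of `natDegree ≤ k` has limit its `k`-th coefficient. -/
lemma lim_poly (p : Polynomial ℚ) {k : ℕ} (hk : p.natDegree ≤ k) :
    Lim (algebraMap (Polynomial ℚ) (RatFunc ℚ) p) ((k : ℤ)) (p.coeff k) := by
  have he : ∀ t : ℝ, evalR (algebraMap (Polynomial ℚ) (RatFunc ℚ) p) t
      = (p.map (algebraMap ℚ ℝ)).eval t := by
    intro t; simp [evalR, RatFunc.eval_algebraMap, Polynomial.eval₂_eq_eval_map]
  have hz : ∀ t : ℝ, (t ^ (k : ℤ)) = t ^ k := fun t => zpow_natCast t k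
  rw [Lim]
  simp only [he, hz]
  by_cases hp : p = 0
  · subst hp
    simpa using (tendsto_const_nhds :
      Tendsto (fun _ : ℝ => (0:ℝ)) atTop (nhds 0)).congr (by intro t; simp)
  · set P : Polynomial ℝ := p.map (algebraMap ℚ ℝ) with hP
    have hPne : P ≠ 0 := by
      simpa [hP, Polynomial.map_eq_zero] using hp
    have hdeg : P.natDegree = p.natDegree := p.natDegree_map (algebraMap ℚ ℝ)
    have hq : ∀ t : ℝ, (t : ℝ) ^ k = Polynomial.eval t (Polynomial.X ^ k : Polynomial ℝ) := by
      intro t; simp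
    rcases lt_or_eq_of_le hk with hlt | heq
    · have hc : p.coeff k = 0 := Polynomial.coeff_eq_zero_of_natDegree_lt hlt
      rw [hc]
      have hd : P.degree < (Polynomial.X ^ k : Polynomial ℝ).degree := by
        rw [Polynomial.degree_X_pow]
        calc P.degree ≤ (P.natDegree : WithBot ℕ) := Polynomial.degree_le_natDegree
          _ < (k : WithBot ℕ) := by exact_mod_cast hdeg ▸ hlt
      have := Polynomial.div_tendsto_zero_of_degree_lt P (Polynomial.X ^ k) hd
      simpa using this.congr (by intro t; rw [hq t])
    · have hd : P.degree = (Polynomial.X ^ k : Polynomial ℝ).degree := by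
        rw [Polynomial.degree_X_pow, Polynomial.degree_eq_natDegree hPne]
        exact_mod_cast hdeg.trans heq
      have := Polynomial.div_tendsto_leadingCoeff_div_of_degree_eq P (Polynomial.X ^ k) hd
      have hlc : P.leadingCoeff = ((p.coeff k : ℚ) : ℝ) := by
        rw [Polynomial.leadingCoeff, hdeg, heq, hP, Polynomial.coeff_map]
        rfl
      rw [Polynomial.leadingCoeff_X_pow] at this
      rw [hlc, div_one] at this
      exact this.congr (by intro t; rw [hq t])

/-- `gs f j` differs from `f j` by an element of the span of the previous vectors. -/
lemma gs_sub_mem_span {F : Type*} [Field F] {m : ℕ} (f : ℕ → Fin m → F) (j : ℕ) :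
    gs f j - f j ∈ Submodule.span F (f '' Set.Iio j) := by
  induction j using Nat.strong_induction_on with
  | _ j ih =>
    rw [gs_eq]
    have hmem : ∀ l : Fin j, gs f (l : ℕ) ∈ Submodule.span F (f '' Set.Iio j) := by
      intro l
      have h1 : gs f (l : ℕ) - f (l : ℕ) ∈ Submodule.span F (f '' Set.Iio (l : ℕ)) := ih _ l.2
      have h2 : Submodule.span F (f '' Set.Iio (l : ℕ)) ≤ Submodule.span F (f '' Set.Iio j) :=
        Submodule.span_mono (Set.image_mono fun x hx => lt_trans hx l.2)
      have h3 : f (l : ℕ) ∈ Submodule.span F (f '' Set.Iio j) :=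
        Submodule.subset_span ⟨l, l.2, rfl⟩
      have := (Submodule.span F (f '' Set.Iio j)).add_mem (h2 h1) h3
      simpa using this
    have : f j - ∑ l : Fin j, gsCoeff f j l • gs f (l : ℕ) - f j
        = -∑ l : Fin j, gsCoeff f j l • gs f (l : ℕ) := by ring
    rw [this]
    exact (Submodule.span F (f '' Set.Iio j)).neg_mem <|
      Submodule.sum_mem _ fun l _ => Submodule.smul_mem _ _ (hmem l)

lemma dot_self_ne_zero {m : ℕ} {u : Fin m → ℚ} (hu : u ≠ 0) : dotF u u ≠ 0 := by
  obtain ⟨k, hk⟩ : ∃ k, u k ≠ 0 := by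
    by_contra h
    push_neg at h
    exact hu (funext h)
  have : 0 < dotF u u := by
    rw [dotF]
    exact Finset.sum_pos' (fun i _ => mul_self_nonneg _)
      ⟨k, Finset.mem_univ k, mul_self_pos.mpr hk⟩
  exact ne_of_gt this

lemma gs_pilot_ne_zero {m n : ℕ} (f : ℕ → Fin m → Polynomial ℚ)
    (hli : LinearIndependent ℚ (fun i : Fin n => pilot (f i))) {j : ℕ} (hj : j < n) :
    gs (fun l => pilot (f l)) j ≠ 0 := by
  intro h0
  set P : ℕ → Fin m → ℚ := fun l => pilot (f l) with hP
  have hmem : P j ∈ Submodule.span ℚ (P '' Set.Iio j) := by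
    have := gs_sub_mem_span P j
    rw [h0] at this
    simpa using (Submodule.span ℚ (P '' Set.Iio j)).neg_mem this
  have hni := hli.notMem_span_image
    (s := {l : Fin n | (l : ℕ) < j}) (x := (⟨j, hj⟩ : Fin n)) (by simp)
  apply hni
  refine Submodule.span_mono ?_ hmem
  rintro x ⟨l, hl, rfl⟩
  exact ⟨⟨l, lt_trans hl hj⟩, hl, rfl⟩

lemma lim_base {m : ℕ} (g : Fin m → Polynomial ℚ) (k : Fin m) :
    Lim (toRF g k) ((degVec g : ℤ)) (pilot g k) := by
  have hnd : (g k).natDegree ≤ degVec g := Finset.le_sup (f := fun k => (g k).natDegree) (Finset.mem_univ k)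
  exact lim_poly (g k) hnd

lemma lim_dot {m : ℕ} {u v : Fin m → RatFunc ℚ} {cu cv : Fin m → ℚ} {k l : ℤ}
    (hu : ∀ k', Lim (u k') k (cu k')) (hv : ∀ k', Lim (v k') l (cv k')) :
    Lim (dotF u v) (k + l) (dotF cu cv) := by
  unfold dotF
  exact lim_sum _ _ _ _ fun k' _ => lim_mul (hu k') (hv k')

lemma lim_gsCoeff_aux {m : ℕ} (F : ℕ → Fin m → RatFunc ℚ) (P : ℕ → Fin m → ℚ)
    {i j : ℕ} {di dj : ℤ}
    (hFi : ∀ k, Lim (F i k) di (P i k))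
    (hGj : ∀ k, Lim (gs F j k) dj (gs P j k))
    (hne : dotF (gs P j) (gs P j) ≠ 0) :
    Lim (gsCoeff F i j) (di - dj) (gsCoeff P i j) := by
  have h := lim_div (lim_dot hFi hGj) (lim_dot hGj hGj) hne
  have hexp : (di + dj) - (dj + dj) = di - dj := by ring
  rw [hexp] at h
  exact h

lemma lim_gs {m n : ℕ} (f : ℕ → Fin m → Polynomial ℚ) (d : ℕ → ℕ)
    (hdeg : ∀ i < n, f i ≠ 0 ∧ degVec (f i) = d i)
    (hli : LinearIndependent ℚ (fun i : Fin n => pilot (f i))) :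
    ∀ i, i < n → ∀ k : Fin m,
      Lim (gs (fun l => toRF (f l)) i k) ((d i : ℤ)) (gs (fun l => pilot (f l)) i k) := by
  intro i
  induction i using Nat.strong_induction_on with
  | _ i ih =>
    intro hi k
    set F := fun l => toRF (f l) with hF
    set P := fun l => pilot (f l) with hP
    have hbase : ∀ i', i' < n → ∀ k' : Fin m, Lim (F i' k') ((d i' : ℤ)) (P i' k') := by
      intro i' hi' k'
      have hdv : degVec (f i') = d i' := (hdeg i' hi').2
      have := lim_base (f i') k'
      rw [hdv] at this
      exact this
    have hcoeff : ∀ j : ℕ, j < i →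
        Lim (gsCoeff F i j) ((d i : ℤ) - d j) (gsCoeff P i j) := by
      intro j hj
      exact lim_gsCoeff_aux F P (hbase i hi) (ih j hj (hj.trans hi))
        (dot_self_ne_zero (gs_pilot_ne_zero f hli (hj.trans hi)))
    rw [gs_eq F i, gs_eq P i]
    simp only [Pi.sub_apply, Finset.sum_apply, Pi.smul_apply, smul_eq_mul]
    refine lim_sub (hbase i hi k) ?_
    refine lim_sum Finset.univ _ _ _ fun j _ => ?_
    have h := lim_mul (hcoeff j j.2) (ih j j.2 (lt_trans j.2 hi) k)
    have hexp : ((d i : ℤ) - d (j : ℕ)) + d (j : ℕ) = (d i : ℤ) := by ring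
    rw [hexp] at h
    exact h

/-- the Gram–Schmidt coefficients ρ_{i,j} of the parametric vectors,
rescaled by t^(d_i - d_j), tend to the Gram–Schmidt coefficients μ_{i,j} of the
pilot vectors as t → ∞. -/
theorem gs_coeff_tendsto_pilot_coeff {m n : ℕ} (f : ℕ → Fin m → Polynomial ℚ) (d : ℕ → ℕ)
    (hdeg : ∀ i < n, f i ≠ 0 ∧ degVec (f i) = d i)
    (hmono : ∀ i j, i ≤ j → j < n → d i ≤ d j)
    (hli : LinearIndependent ℚ (fun i : Fin n => pilot (f i))) :
    ∀ j i, j < i → i < n →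
      Tendsto
        (fun t : ℝ => evalR (gsCoeff (fun l => toRF (f l)) i j) t / t ^ (d i - d j))
        atTop
        (nhds ((gsCoeff (fun l => pilot (f l)) i j : ℚ) : ℝ)) := by
  intro j i hji hin
  have hbase : ∀ k' : Fin m, Lim (toRF (f i) k') ((d i : ℤ)) (pilot (f i) k') := by
    intro k'
    have hdv : degVec (f i) = d i := (hdeg i hin).2
    have := lim_base (f i) k'
    rw [hdv] at this
    exact this
  have hL : Lim (gsCoeff (fun l => toRF (f l)) i j) ((d i : ℤ) - d j)
      (gsCoeff (fun l => pilot (f l)) i j) :=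
    lim_gsCoeff_aux (fun l => toRF (f l)) (fun l => pilot (f l)) hbase
      (lim_gs f d hdeg hli j (hji.trans hin))
      (dot_self_ne_zero (gs_pilot_ne_zero f hli (hji.trans hin)))
  have hcast : ((d i : ℤ) - d j) = ((d i - d j : ℕ) : ℤ) := by
    have := hmono j i hji.le hin
    omega
  rw [Lim, hcast] at hL
  refine hL.congr fun t => ?_
  rw [zpow_natCast]
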